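/- arXiv:2509.02380 — 5 statements merged into one kernel-verified Lean document; each statement's English description precedes it below -/
import Mathlib

section
/- Let X, Y be subsets of a finite set N with X ⊄ Y and Y ⊄ X. Then |X|·|N\X| + |Y|·|N\Y| > |X∩Y|·|N\(X∩Y)| + |X∪Y|·|N\(X∪Y)|. -/
open Finset

section

variable {α : Type*} [DecidableEq α]

theorem Finset.card_sdiff_eq_card_sdiff_add_card_sdiff {s t u : Finset α} (hst : s ⊆ t)
    (htu : t ⊆ u) : #(u \ s) = #(t \ s) + #(u \ t) := by
  rw [card_sdiff_of_subset hst, card_sdiff_of_subset htu, card_sdiff_of_subset (hst.trans htu)]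
  have := card_le_card hst
  have := card_le_card htu
  omega

/-- Both sides are polynomials in the sizes of the four atoms `X ∩ Y`, `X \ Y`, `Y \ X`,
`N \ (X ∪ Y)`. -/
theorem Finset.card_mul_card_sdiff_add_card_mul_card_sdiff {N X Y : Finset α} (hX : X ⊆ N)
    (hY : Y ⊆ N) :
    #X * #(N \ X) + #Y * #(N \ Y)
      = #(X ∩ Y) * #(N \ (X ∩ Y)) + #(X ∪ Y) * #(N \ (X ∪ Y)) + 2 * #(X \ Y) * #(Y \ X) := by
  have hX' : #X = #(X ∩ Y) + #(X \ Y) := (card_inter_add_card_sdiff X Y).symm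
  have hY' : #Y = #(X ∩ Y) + #(Y \ X) := by rw [inter_comm, card_inter_add_card_sdiff]
  have hXY : #(X ∪ Y) = #(X ∩ Y) + #(X \ Y) + #(Y \ X) := by
    rw [← hX', add_comm, card_sdiff_add_card, union_comm]
  have hNX : #(N \ X) = #(Y \ X) + #(N \ (X ∪ Y)) := by
    rw [card_sdiff_eq_card_sdiff_add_card_sdiff subset_union_left (union_subset hX hY),
      union_sdiff_left]
  have hNY : #(N \ Y) = #(X \ Y) + #(N \ (X ∪ Y)) := by
    rw [card_sdiff_eq_card_sdiff_add_card_sdiff subset_union_right (union_subset hX hY),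
      union_sdiff_right]
  have hNXY : #(N \ (X ∩ Y)) = #(X \ Y) + #(N \ X) := by
    rw [card_sdiff_eq_card_sdiff_add_card_sdiff inter_subset_left hX, sdiff_inter_self_left]
  rw [hNXY, hX', hY', hXY, hNX, hNY]
  ring

end

theorem refinement_sum_decrease {α : Type*} [DecidableEq α]
    (N X Y : Finset α) (hX : X ⊆ N) (hY : Y ⊆ N)
    (hXY : ¬ X ⊆ Y) (hYX : ¬ Y ⊆ X) :
    (X ∩ Y).card * (N \ (X ∩ Y)).card + (X ∪ Y).card * (N \ (X ∪ Y)).card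
      < X.card * (N \ X).card + Y.card * (N \ Y).card := by
  have hp : 0 < #(X \ Y) := card_pos.mpr (sdiff_nonempty.mpr hXY)
  have hq : 0 < #(Y \ X) := card_pos.mpr (sdiff_nonempty.mpr hYX)
  rw [card_mul_card_sdiff_add_card_mul_card_sdiff hX hY]
  have := Nat.mul_pos (Nat.mul_pos two_pos hp) hq
  omega
end

section
/- Let (N,v) be a convex game (v supermodular, v(∅)=0), let x be a core element, and let ∅ ≠ S ⊊ N. Then the reduced game v'(T) := max over Q ⊆ N\S of (v(T∪Q) − x(Q)), for T ⊆ S, is supermodular on subsets of S: v'(T)+v'(R) ≤ v'(T∪R)+v'(T∩R) for all T,R ⊆ S. -/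
/-!
Write `v'(T) = max_{Q ⊆ C} (v(T ∪ Q) - x(Q))` with `C = N \ S`. Pick maximizers `Q₁` for `T` and
`Q₂` for `R`. Since `T, R` avoid `C`, the sets `T ∪ Q₁` and `R ∪ Q₂` have union `(T ∪ R) ∪ (Q₁ ∪ Q₂)`
and intersection `(T ∩ R) ∪ (Q₁ ∩ Q₂)`, so supermodularity of `v` together with the modularity of
`x(·)` bounds `v'(T) + v'(R)` by the values of two admissible candidates for `v'(T ∪ R)` and
`v'(T ∩ R)`.
-/

open Finset

section ReducedGame

variable {α : Type*} [DecidableEq α]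

theorem Finset.union_inter_union_of_disjoint {T R Q₁ Q₂ : Finset α}
    (hT : Disjoint T Q₂) (hR : Disjoint R Q₁) :
    (T ∪ Q₁) ∩ (R ∪ Q₂) = T ∩ R ∪ Q₁ ∩ Q₂ := by
  ext a
  have hTa : a ∈ T → a ∉ Q₂ := fun h => disjoint_left.mp hT h
  have hRa : a ∈ R → a ∉ Q₁ := fun h => disjoint_left.mp hR h
  simp only [mem_inter, mem_union]
  tauto

/-- `C` is the set of players removed from the game (`N \ S` in the paper). -/
def reducedGame (v : Finset α → ℝ) (x : α → ℝ) (C T : Finset α) : ℝ :=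
  C.powerset.sup' (powerset_nonempty C) fun Q => v (T ∪ Q) - ∑ i ∈ Q, x i

variable (v : Finset α → ℝ) (x : α → ℝ) {C : Finset α}

theorem le_reducedGame {T Q : Finset α} (hQ : Q ⊆ C) :
    v (T ∪ Q) - ∑ i ∈ Q, x i ≤ reducedGame v x C T :=
  le_sup' (fun Q => v (T ∪ Q) - ∑ i ∈ Q, x i) (mem_powerset.mpr hQ)

theorem exists_subset_reducedGame_eq (C T : Finset α) :
    ∃ Q ⊆ C, reducedGame v x C T = v (T ∪ Q) - ∑ i ∈ Q, x i := by
  obtain ⟨Q, hQ, hmax⟩ := exists_mem_eq_sup' (powerset_nonempty C)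
    fun Q => v (T ∪ Q) - ∑ i ∈ Q, x i
  exact ⟨Q, mem_powerset.mp hQ, hmax⟩

theorem reducedGame_add_le {T R : Finset α}
    (hsuper : ∀ S T : Finset α, v S + v T ≤ v (S ∩ T) + v (S ∪ T))
    (hT : Disjoint T C) (hR : Disjoint R C) :
    reducedGame v x C T + reducedGame v x C R
      ≤ reducedGame v x C (T ∪ R) + reducedGame v x C (T ∩ R) := by
  obtain ⟨Q₁, hQ₁, hT_eq⟩ := exists_subset_reducedGame_eq v x C T
  obtain ⟨Q₂, hQ₂, hR_eq⟩ := exists_subset_reducedGame_eq v x C R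
  have hunion : (T ∪ Q₁) ∪ (R ∪ Q₂) = (T ∪ R) ∪ (Q₁ ∪ Q₂) := union_union_union_comm T Q₁ R Q₂
  have hinter : (T ∪ Q₁) ∩ (R ∪ Q₂) = (T ∩ R) ∪ (Q₁ ∩ Q₂) :=
    union_inter_union_of_disjoint (hT.mono_right hQ₂) (hR.mono_right hQ₁)
  have hv := hsuper (T ∪ Q₁) (R ∪ Q₂)
  rw [hunion, hinter] at hv
  have hx : ∑ i ∈ Q₁, x i + ∑ i ∈ Q₂, x i = ∑ i ∈ Q₁ ∪ Q₂, x i + ∑ i ∈ Q₁ ∩ Q₂, x i :=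
    sum_union_inter.symm
  have hsup := le_reducedGame v x (T := T ∪ R) (union_subset hQ₁ hQ₂)
  have hinf := le_reducedGame v x (T := T ∩ R) ((inter_subset_left (s₂ := Q₂)).trans hQ₁)
  linarith

end ReducedGame

theorem reduced_game_supermodular_general {α : Type*} [Fintype α] [DecidableEq α]
    (v : Finset α → ℝ)
    (hsuper : ∀ S T : Finset α, v S + v T ≤ v (S ∩ T) + v (S ∪ T))
    (x : α → ℝ)
    (S : Finset α) :
    ∀ T R : Finset α, T ⊆ S → R ⊆ S →
      (Sᶜ.powerset.sup' (Finset.powerset_nonempty _)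
          (fun Q => v (T ∪ Q) - ∑ i ∈ Q, x i))
        + (Sᶜ.powerset.sup' (Finset.powerset_nonempty _)
          (fun Q => v (R ∪ Q) - ∑ i ∈ Q, x i))
      ≤ (Sᶜ.powerset.sup' (Finset.powerset_nonempty _)
          (fun Q => v ((T ∪ R) ∪ Q) - ∑ i ∈ Q, x i))
        + (Sᶜ.powerset.sup' (Finset.powerset_nonempty _)
          (fun Q => v ((T ∩ R) ∪ Q) - ∑ i ∈ Q, x i)) :=
  fun _ _ hT hR => reducedGame_add_le v x hsuper
    (disjoint_compl_right_iff.mpr hT) (disjoint_compl_right_iff.mpr hR)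

theorem reduced_game_supermodular {α : Type*} [Fintype α] [DecidableEq α]
    (v : Finset α → ℝ) (h0 : v ∅ = 0)
    (hsuper : ∀ S T : Finset α, v S + v T ≤ v (S ∩ T) + v (S ∪ T))
    (x : α → ℝ)
    (hcore : ∀ R : Finset α, v R ≤ ∑ i ∈ R, x i)
    (hN : ∑ i, x i = v Finset.univ)
    (S : Finset α) (hSne : S.Nonempty) (hSproper : S ≠ Finset.univ) :
    ∀ T R : Finset α, T ⊆ S → R ⊆ S →
      (Sᶜ.powerset.sup' (Finset.powerset_nonempty _)
          (fun Q => v (T ∪ Q) - ∑ i ∈ Q, x i))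
        + (Sᶜ.powerset.sup' (Finset.powerset_nonempty _)
          (fun Q => v (R ∪ Q) - ∑ i ∈ Q, x i))
      ≤ (Sᶜ.powerset.sup' (Finset.powerset_nonempty _)
          (fun Q => v ((T ∪ R) ∪ Q) - ∑ i ∈ Q, x i))
        + (Sᶜ.powerset.sup' (Finset.powerset_nonempty _)
          (fun Q => v ((T ∩ R) ∪ Q) - ∑ i ∈ Q, x i)) :=
  reduced_game_supermodular_general v hsuper x S
end

section
/- Let (N,v) be a convex game, ε* its least core value, x a point in the least core (so x(N)=v(N), x(R) ≥ v(R)+ε* for all nonempty R ⊊ N), and S an essential coalition (nonempty S ⊊ N with x(S)=v(S)+ε*). Then for all T ⊆ S: max over Q ⊆ N\S of (v(T∪Q) − x(Q)) = max{v(T), v(T∪(N\S)) − x(N\S)}. -/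
open Finset

/-! Taking `Q = ∅` and `Q = N \ S` gives the two terms of the maximum. Any other `Q ⊆ N \ S`
makes `S ∪ Q` a proper coalition, so feasibility of `x` together with tightness of `S` gives
`v (S ∪ Q) - x Q ≤ v S`, while supermodularity gives `v (T ∪ Q) - v T ≤ v (S ∪ Q) - v S`;
hence `v (T ∪ Q) - x Q ≤ v T`. -/

theorem sub_le_sub_sup_of_supermodular {L : Type*} [DistribLattice L] [OrderBot L]
    {v : L → ℝ} (hsuper : ∀ a b : L, v a + v b ≤ v (a ⊓ b) + v (a ⊔ b))
    {t s q : L} (hts : t ≤ s) (hqs : Disjoint q s) :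
    v (t ⊔ q) - v t ≤ v (s ⊔ q) - v s := by
  have hinf : (t ⊔ q) ⊓ s = t := by
    rw [inf_sup_right, inf_eq_left.mpr hts, hqs.eq_bot, sup_bot_eq]
  have hsup : (t ⊔ q) ⊔ s = s ⊔ q := by
    rw [sup_right_comm, sup_eq_right.mpr hts]
  have := hsuper (t ⊔ q) s
  rw [hinf, hsup] at this
  linarith

section LeastCore

variable {α : Type*} [Fintype α] [DecidableEq α] {v : Finset α → ℝ} {ε : ℝ} {x : α → ℝ}
  {S : Finset α}

theorem union_ne_univ_of_ssubset_compl {Q : Finset α} (hQ : Q ⊆ Sᶜ) (hQS : Q ≠ Sᶜ) :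
    S ∪ Q ≠ univ := by
  intro h
  refine hQS (hQ.antisymm fun a ha => ?_)
  have ha' : a ∈ S ∪ Q := h ▸ mem_univ a
  exact (mem_union.mp ha').resolve_left (mem_compl.mp ha)

theorem sub_sum_le_of_tight
    (hfeas : ∀ R : Finset α, R.Nonempty → R ≠ univ → v R + ε ≤ ∑ i ∈ R, x i)
    (hSne : S.Nonempty) (hess : ∑ i ∈ S, x i = v S + ε)
    {Q : Finset α} (hQS : Disjoint S Q) (hproper : S ∪ Q ≠ univ) :
    v (S ∪ Q) - ∑ i ∈ Q, x i ≤ v S := by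
  have h := hfeas (S ∪ Q) (hSne.mono subset_union_left) hproper
  rw [sum_union hQS] at h
  linarith

end LeastCore

theorem reduced_game_max_formula_general {α : Type*} [Fintype α] [DecidableEq α]
    (v : Finset α → ℝ)
    (hsuper : ∀ S T : Finset α, v S + v T ≤ v (S ∩ T) + v (S ∪ T))
    (ε : ℝ) (x : α → ℝ)
    (hfeas : ∀ R : Finset α, R.Nonempty → R ≠ Finset.univ → v R + ε ≤ ∑ i ∈ R, x i)
    (S : Finset α) (hSne : S.Nonempty)
    (hess : ∑ i ∈ S, x i = v S + ε) :
    ∀ T : Finset α, T ⊆ S →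
      (Sᶜ.powerset.sup' (Finset.powerset_nonempty _)
          (fun Q => v (T ∪ Q) - ∑ i ∈ Q, x i))
        = max (v T) (v (T ∪ Sᶜ) - ∑ i ∈ Sᶜ, x i) := by
  intro T hT
  refine le_antisymm (sup'_le _ _ fun Q hQ => ?_) (max_le ?_ ?_)
  · rw [mem_powerset] at hQ
    by_cases hQS : Q = Sᶜ
    · exact hQS ▸ le_max_right _ _
    have hdisj : Disjoint Q S := disjoint_of_subset_left hQ disjoint_compl_left
    have hmarginal := sub_le_sub_sup_of_supermodular hsuper hT hdisj
    have htight := sub_sum_le_of_tight hfeas hSne hess hdisj.symm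
      (union_ne_univ_of_ssubset_compl hQ hQS)
    exact le_max_of_le_left (by simp only [sup_eq_union] at hmarginal; linarith)
  · simpa only [union_empty, sum_empty, sub_zero] using
      le_sup' (fun Q => v (T ∪ Q) - ∑ i ∈ Q, x i) (empty_mem_powerset Sᶜ)
  · exact le_sup' (fun Q => v (T ∪ Q) - ∑ i ∈ Q, x i) (mem_powerset_self Sᶜ)

theorem reduced_game_max_formula {α : Type*} [Fintype α] [DecidableEq α]
    (v : Finset α → ℝ) (h0 : v ∅ = 0)
    (hsuper : ∀ S T : Finset α, v S + v T ≤ v (S ∩ T) + v (S ∪ T))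
    (ε : ℝ) (x : α → ℝ)
    (hN : ∑ i, x i = v Finset.univ)
    (hfeas : ∀ R : Finset α, R.Nonempty → R ≠ Finset.univ → v R + ε ≤ ∑ i ∈ R, x i)
    (S : Finset α) (hSne : S.Nonempty) (hSproper : S ≠ Finset.univ)
    (hess : ∑ i ∈ S, x i = v S + ε) :
    ∀ T : Finset α, T ⊆ S →
      (Sᶜ.powerset.sup' (Finset.powerset_nonempty _)
          (fun Q => v (T ∪ Q) - ∑ i ∈ Q, x i))
        = max (v T) (v (T ∪ Sᶜ) - ∑ i ∈ Sᶜ, x i) :=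
  reduced_game_max_formula_general v hsuper ε x hfeas S hSne hess
end

section
/- Let (N,v) be a convex game, ε* its least core value, x a least core point, and S an essential coalition (x(S)=v(S)+ε*). Then for all T ⊆ N\S: max over Q ⊆ S of (v(T∪Q) − x(Q)) = max{v(T), v(T∪S) − x(S)}. -/
/-!
Supermodularity makes the marginal value `v (T ∪ Q) - v Q` of a coalition `T` disjoint from `S`
monotone in `Q ⊆ S`. For nonempty `Q`, feasibility gives `x(Q) ≥ v Q + ε` while essentiality
gives `x(S) = v S + ε`, so `v (T ∪ Q) - x(Q) ≤ v (T ∪ S) - x(S)`; the case `Q = ∅` contributes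
`v T`.
-/

open Finset

section

variable {α : Type*} [DecidableEq α]

theorem supermodular_marginal_le {v : Finset α → ℝ}
    (hsuper : ∀ S T : Finset α, v S + v T ≤ v (S ∩ T) + v (S ∪ T))
    {T Q S : Finset α} (hdisj : Disjoint T S) (hQ : Q ⊆ S) :
    v (T ∪ Q) - v Q ≤ v (T ∪ S) - v S := by
  have hinter : (T ∪ Q) ∩ S = Q := by
    rw [union_inter_distrib_right, disjoint_iff_inter_eq_empty.mp hdisj,
      inter_eq_left.mpr hQ, empty_union]
  have hunion : T ∪ Q ∪ S = T ∪ S := by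
    rw [union_assoc, union_eq_right.mpr hQ]
  have := hsuper (T ∪ Q) S
  rw [hinter, hunion] at this
  linarith

theorem excess_le_of_subset_essential [Fintype α] {v : Finset α → ℝ}
    (hsuper : ∀ S T : Finset α, v S + v T ≤ v (S ∩ T) + v (S ∪ T))
    {ε : ℝ} {x : α → ℝ}
    (hfeas : ∀ R : Finset α, R.Nonempty → R ≠ univ → v R + ε ≤ ∑ i ∈ R, x i)
    {S T Q : Finset α} (hSproper : S ≠ univ) (hess : ∑ i ∈ S, x i = v S + ε)
    (hdisj : Disjoint T S) (hQ : Q ⊆ S) (hQne : Q.Nonempty) :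
    v (T ∪ Q) - ∑ i ∈ Q, x i ≤ v (T ∪ S) - ∑ i ∈ S, x i := by
  have hQproper : Q ≠ univ := fun h => hSproper (univ_subset_iff.mp (h ▸ hQ))
  have := hfeas Q hQne hQproper
  have := supermodular_marginal_le hsuper hdisj hQ
  linarith

end

theorem reduced_game_max_formula_complement_general {α : Type*} [Fintype α] [DecidableEq α]
    (v : Finset α → ℝ)
    (hsuper : ∀ S T : Finset α, v S + v T ≤ v (S ∩ T) + v (S ∪ T))
    (ε : ℝ) (x : α → ℝ)
    (hfeas : ∀ R : Finset α, R.Nonempty → R ≠ Finset.univ → v R + ε ≤ ∑ i ∈ R, x i)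
    (S : Finset α) (hSproper : S ≠ Finset.univ)
    (hess : ∑ i ∈ S, x i = v S + ε) :
    ∀ T : Finset α, T ⊆ Sᶜ →
      (S.powerset.sup' (Finset.powerset_nonempty _)
          (fun Q => v (T ∪ Q) - ∑ i ∈ Q, x i))
        = max (v T) (v (T ∪ S) - ∑ i ∈ S, x i) := by
  intro T hT
  have hdisj : Disjoint T S := subset_compl_iff_disjoint_right.mp hT
  apply le_antisymm
  · refine sup'_le _ _ fun Q hQ => ?_
    rcases Q.eq_empty_or_nonempty with rfl | hQne
    · simp
    · exact le_max_of_le_right <| excess_le_of_subset_essential hsuper hfeas hSproper hess hdisj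
        (mem_powerset.mp hQ) hQne
  · apply max_le
    · simpa only [union_empty, sum_empty, sub_zero] using
        le_sup' (fun Q => v (T ∪ Q) - ∑ i ∈ Q, x i) (empty_mem_powerset S)
    · exact le_sup' (fun Q => v (T ∪ Q) - ∑ i ∈ Q, x i) (mem_powerset_self S)

theorem reduced_game_max_formula_complement {α : Type*} [Fintype α] [DecidableEq α]
    (v : Finset α → ℝ) (h0 : v ∅ = 0)
    (hsuper : ∀ S T : Finset α, v S + v T ≤ v (S ∩ T) + v (S ∪ T))
    (ε : ℝ) (x : α → ℝ)
    (hN : ∑ i, x i = v Finset.univ)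
    (hfeas : ∀ R : Finset α, R.Nonempty → R ≠ Finset.univ → v R + ε ≤ ∑ i ∈ R, x i)
    (S : Finset α) (hSne : S.Nonempty) (hSproper : S ≠ Finset.univ)
    (hess : ∑ i ∈ S, x i = v S + ε) :
    ∀ T : Finset α, T ⊆ Sᶜ →
      (S.powerset.sup' (Finset.powerset_nonempty _)
          (fun Q => v (T ∪ Q) - ∑ i ∈ Q, x i))
        = max (v T) (v (T ∪ S) - ∑ i ∈ S, x i) :=
  reduced_game_max_formula_complement_general v hsuper ε x hfeas S hSproper hess
end

section
/- Let (N,w) be a game with w crossing supermodular and s ∈ N. Define u(S) := w(N\S) − w(N) for S ⊆ N\{s}, and let w̄, ū denote the superadditive covers of w and u restricted to subsets of N\{s}. Then Core(w) ≠ ∅ if and only if −w̄(S) − ū(S) ≥ 0 for all S ⊆ N\{s}. -/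
/-
On `D = N \ {s}` crossing supermodularity makes both `w` and `u` intersecting supermodular, and
the superadditive cover of an intersecting supermodular function is supermodular: uncrossing an
optimal partition of `A` against one of `B` yields partitions of `A ∪ B` and of `A ∩ B` of no
smaller total value. If `w̄ + ū ≤ 0` on `D`, Frank's discrete sandwich theorem then gives an
additive `x` on `D` with `w̄ ≤ x ≤ -ū`, and `x s := w N - x D` completes it to a core element: a
coalition containing `s` is the complement of a subset `T` of `D`, and `u T ≤ ū T ≤ -x T` is
exactly its core constraint. Conversely a core element satisfies `w ≤ x` and `u ≤ -x` on
subsets of `D`, hence `w̄ ≤ x ≤ -ū` by superadditivity of `x`.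
-/

open Finset

/-- `Ps` is a proper partition of `S`: a family of pairwise disjoint nonempty sets
whose union is `S`. -/
def IsProperPartition {α : Type*} [DecidableEq α] (Ps : Finset (Finset α)) (S : Finset α) : Prop :=
  (∀ P ∈ Ps, P.Nonempty) ∧ (∀ P ∈ Ps, ∀ Q ∈ Ps, P ≠ Q → Disjoint P Q) ∧ Ps.biUnion id = S

/-- `vbar` is the superadditive cover of `v` restricted to subsets of `D`. -/
def IsSupaddCoverOn {α : Type*} [DecidableEq α] (v vbar : Finset α → ℝ) (D : Finset α) : Prop :=
  vbar ∅ = 0 ∧ ∀ S : Finset α, S ⊆ D → S.Nonempty →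
    (∃ Ps, IsProperPartition Ps S ∧ vbar S = ∑ P ∈ Ps, v P) ∧
    (∀ Ps, IsProperPartition Ps S → ∑ P ∈ Ps, v P ≤ vbar S)

namespace IsProperPartition

variable {α : Type*} [DecidableEq α] {Ps : Finset (Finset α)} {S : Finset α}

lemma subset_of_mem (h : IsProperPartition Ps S) {P : Finset α} (hP : P ∈ Ps) : P ⊆ S :=
  h.2.2 ▸ subset_biUnion_of_mem id hP

lemma empty : IsProperPartition (∅ : Finset (Finset α)) ∅ := by
  simp [IsProperPartition]

lemma eq_empty_of_empty (h : IsProperPartition Ps ∅) : Ps = ∅ :=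
  eq_empty_of_forall_notMem fun _ hP =>
    (h.1 _ hP).ne_empty (subset_empty.1 (h.subset_of_mem hP))

lemma sum_sum_eq {M : Type*} [AddCommMonoid M] (h : IsProperPartition Ps S) (x : α → M) :
    ∑ P ∈ Ps, ∑ i ∈ P, x i = ∑ i ∈ S, x i := by
  rw [← h.2.2]
  exact (sum_biUnion h.2.1).symm

lemma insert_of_disjoint (h : IsProperPartition Ps S) {Z : Finset α} (hZ : Z.Nonempty)
    (hZS : Disjoint Z S) : IsProperPartition (insert Z Ps) (Z ∪ S) := by
  refine ⟨?_, ?_, by rw [biUnion_insert, h.2.2, id]⟩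
  · simp only [mem_insert, forall_eq_or_imp]
    exact ⟨hZ, h.1⟩
  · rintro P hP Q hQ hPQ
    rcases mem_insert.1 hP with rfl | hP' <;> rcases mem_insert.1 hQ with rfl | hQ'
    · exact absurd rfl hPQ
    · exact hZS.mono_right (h.subset_of_mem hQ')
    · exact (hZS.mono_right (h.subset_of_mem hP')).symm
    · exact h.2.1 P hP' Q hQ' hPQ

lemma of_insert {Q : Finset α} (h : IsProperPartition (insert Q Ps) S) (hQ : Q ∉ Ps) :
    IsProperPartition Ps (S \ Q) := by
  refine ⟨fun P hP => h.1 P (mem_insert_of_mem hP),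
    fun P hP P' hP' => h.2.1 P (mem_insert_of_mem hP) P' (mem_insert_of_mem hP'), ?_⟩
  have hdisj : Disjoint (Ps.biUnion id) Q := (disjoint_biUnion_left _ _ _).2 fun P hP =>
    h.2.1 P (mem_insert_of_mem hP) Q (mem_insert_self Q Ps) (ne_of_mem_of_not_mem hP hQ)
  rw [← h.2.2, biUnion_insert, id, union_sdiff_left, sdiff_eq_self_of_disjoint hdisj]

lemma inter_biUnion_filter_not_disjoint (h : IsProperPartition Ps S) (Q : Finset α) :
    Q ∩ {P ∈ Ps | ¬Disjoint P Q}.biUnion id = Q ∩ S := by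
  rw [← h.2.2]
  ext x
  simp only [mem_inter, mem_biUnion, mem_filter, id]
  exact and_congr_right fun hx => ⟨fun ⟨P, ⟨hP, _⟩, hxP⟩ => ⟨P, hP, hxP⟩,
    fun ⟨P, hP, hxP⟩ => ⟨P, ⟨hP, not_disjoint_iff.2 ⟨x, hxP, hx⟩⟩, hxP⟩⟩

lemma merge (h : IsProperPartition Ps S) {Q : Finset α} (hQ : Q.Nonempty) :
    IsProperPartition
      (insert (Q ∪ {P ∈ Ps | ¬Disjoint P Q}.biUnion id) {P ∈ Ps | Disjoint P Q})
      (Q ∪ S) := by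
  set Meet := {P ∈ Ps | ¬Disjoint P Q}
  set Rest := {P ∈ Ps | Disjoint P Q}
  have hRest : IsProperPartition Rest (Rest.biUnion id) :=
    ⟨fun P hP => h.1 P (mem_filter.1 hP).1,
      fun P hP P' hP' => h.2.1 P (mem_filter.1 hP).1 P' (mem_filter.1 hP').1, rfl⟩
  have hdisj : Disjoint (Q ∪ Meet.biUnion id) (Rest.biUnion id) := by
    simp only [disjoint_union_left, disjoint_biUnion_left, disjoint_biUnion_right]
    intro R hR
    obtain ⟨hR, hRQ⟩ := mem_filter.1 hR
    refine ⟨hRQ.symm, fun P hP => ?_⟩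
    obtain ⟨hP, hPQ⟩ := mem_filter.1 hP
    exact h.2.1 P hP R hR fun hPR => hPQ (hPR ▸ hRQ)
  convert hRest.insert_of_disjoint (hQ.mono subset_union_left) hdisj using 1
  rw [union_assoc, union_comm (Meet.biUnion id), ← union_biUnion, filter_union_filter_not_eq,
    h.2.2]

end IsProperPartition

namespace IsSupaddCoverOn

variable {α : Type*} [DecidableEq α] {v vbar : Finset α → ℝ} {D S : Finset α}

lemma sum_le (h : IsSupaddCoverOn v vbar D) (hS : S ⊆ D) {Ps : Finset (Finset α)}
    (hPs : IsProperPartition Ps S) : ∑ P ∈ Ps, v P ≤ vbar S := by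
  rcases S.eq_empty_or_nonempty with rfl | hne
  · simp [hPs.eq_empty_of_empty, h.1]
  · exact (h.2 S hS hne).2 Ps hPs

lemma exists_partition (h : IsSupaddCoverOn v vbar D) (hS : S ⊆ D) :
    ∃ Ps, IsProperPartition Ps S ∧ vbar S = ∑ P ∈ Ps, v P := by
  rcases S.eq_empty_or_nonempty with rfl | hne
  · exact ⟨∅, .empty, by simp [h.1]⟩
  · exact (h.2 S hS hne).1

lemma self_le (h : IsSupaddCoverOn v vbar D) (hv : v ∅ ≤ 0) (hS : S ⊆ D) : v S ≤ vbar S := by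
  rcases S.eq_empty_or_nonempty with rfl | hne
  · simpa [h.1] using hv
  · simpa using h.sum_le (by simpa using hS)
      (IsProperPartition.empty.insert_of_disjoint hne (disjoint_empty_right S))

lemma add_le (h : IsSupaddCoverOn v vbar D) {X Z : Finset α} (hXZ : X ∪ Z ⊆ D)
    (hZ : Z.Nonempty) (hd : Disjoint X Z) : vbar X + v Z ≤ vbar (X ∪ Z) := by
  obtain ⟨Ps, hPs, hX⟩ := h.exists_partition (subset_union_left.trans hXZ)
  have hZPs : Z ∉ Ps := fun hZ' =>
    hZ.ne_empty (disjoint_self.1 (hd.symm.mono_right (hPs.subset_of_mem hZ')))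
  have := h.sum_le (union_comm X Z ▸ hXZ) (hPs.insert_of_disjoint hZ hd.symm)
  rw [sum_insert hZPs, union_comm] at this
  linarith

lemma le_sum (h : IsSupaddCoverOn v vbar D) {x : α → ℝ}
    (hx : ∀ P ⊆ D, P.Nonempty → v P ≤ ∑ i ∈ P, x i) (hS : S ⊆ D) : vbar S ≤ ∑ i ∈ S, x i := by
  obtain ⟨Ps, hPs, hS'⟩ := h.exists_partition hS
  rw [hS', ← hPs.sum_sum_eq x]
  exact sum_le_sum fun P hP => hx P ((hPs.subset_of_mem hP).trans hS) (hPs.1 P hP)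

end IsSupaddCoverOn

section Supermodularity

variable {α : Type*} [DecidableEq α]

def SupermodularOn (f : Finset α → ℝ) (D : Finset α) : Prop :=
  ∀ ⦃S T : Finset α⦄, S ⊆ D → T ⊆ D → f S + f T ≤ f (S ∩ T) + f (S ∪ T)

def IntersectingSupermodularOn (f : Finset α → ℝ) (D : Finset α) : Prop :=
  ∀ ⦃S T : Finset α⦄, S ⊆ D → T ⊆ D → (S ∩ T).Nonempty → f S + f T ≤ f (S ∩ T) + f (S ∪ T)

end Supermodularity

namespace IntersectingSupermodularOn

variable {α : Type*} [DecidableEq α] {f fbar : Finset α → ℝ} {D : Finset α}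

lemma add_sum_add_le (hf : IntersectingSupermodularOn f D) (hfbar : IsSupaddCoverOn f fbar D)
    {Q Y : Finset α} (hQ : Q ⊆ D) (hY : Y ⊆ D) (hYQ : Disjoint Y Q) {Fs : Finset (Finset α)}
    (hFs : ∀ P ∈ Fs, P ⊆ D ∧ ¬Disjoint P Q) (hdisj : (Fs : Set (Finset α)).PairwiseDisjoint id) :
    f Q + ∑ P ∈ Fs, f P + fbar Y ≤ f (Q ∪ Fs.biUnion id) + fbar (Y ∪ Q ∩ Fs.biUnion id) := by
  induction Fs using Finset.induction_on with
  | empty => simp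
  | insert P Fs hP ih =>
    rw [coe_insert, Set.pairwiseDisjoint_insert] at hdisj
    obtain ⟨hPD, hPQ⟩ := hFs P (mem_insert_self P Fs)
    set U := Fs.biUnion id
    have hUD : U ⊆ D := biUnion_subset.2 fun P' hP' => (hFs P' (mem_insert_of_mem hP')).1
    have hPU : Disjoint P U := (disjoint_biUnion_right _ _ _).2 fun P' hP' =>
      hdisj.2 P' hP' (ne_of_mem_of_not_mem hP' hP).symm
    have hQP : (Q ∩ P).Nonempty := not_disjoint_iff_nonempty_inter.1 (disjoint_comm.not.1 hPQ)
    have e₀ : (Q ∪ U) ∩ P = Q ∩ P := by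
      rw [union_inter_distrib_right, disjoint_iff_inter_eq_empty.1 hPU.symm, union_empty]
    have hmerge := hf (union_subset hQ hUD) hPD (e₀ ▸ hQP)
    rw [e₀] at hmerge
    have hpiece := hfbar.add_le (X := Y ∪ Q ∩ U) (Z := Q ∩ P)
      (union_subset (union_subset hY (inter_subset_left.trans hQ)) (inter_subset_left.trans hQ))
      hQP (disjoint_union_left.2 ⟨hYQ.mono_right inter_subset_left,
        hPU.symm.mono inter_subset_right inter_subset_right⟩)
    have e₁ : Q ∪ U ∪ P = Q ∪ (insert P Fs).biUnion id := by
      rw [biUnion_insert, id, union_assoc, union_comm U]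
    have e₂ : Y ∪ Q ∩ U ∪ Q ∩ P = Y ∪ Q ∩ (insert P Fs).biUnion id := by
      rw [biUnion_insert, id, inter_union_distrib_left, union_assoc, union_comm (Q ∩ U)]
    rw [sum_insert hP, ← e₁, ← e₂]
    linarith [ih (fun P' hP' => hFs P' (mem_insert_of_mem hP')) hdisj.1]

lemma sum_add_sum_add_le (hf : IntersectingSupermodularOn f D) (hfbar : IsSupaddCoverOn f fbar D)
    {Qs : Finset (Finset α)} : ∀ {A B Y : Finset α} {Ps : Finset (Finset α)},
    IsProperPartition Ps A → IsProperPartition Qs B → A ⊆ D → B ⊆ D → Y ⊆ D → Disjoint Y B →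
    ∑ P ∈ Ps, f P + ∑ Q ∈ Qs, f Q + fbar Y ≤ fbar (A ∪ B) + fbar (Y ∪ A ∩ B) := by
  -- Each part `Q` of `B` in turn absorbs the parts of `A` it meets; the pieces `Q ∩ A` it cuts
  -- off are collected in `Y`.
  induction Qs using Finset.induction_on with
  | empty =>
    intro A B Y Ps hPs hQs hA _ _ _
    obtain rfl : B = ∅ := hQs.2.2.symm
    simpa using hfbar.sum_le hA hPs
  | insert Q Qs hQ ih =>
    intro A B Y Ps hPs hQs hA hB hY hYB
    have hQB : Q ⊆ B := hQs.subset_of_mem (mem_insert_self Q Qs)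
    have hQne : Q.Nonempty := hQs.1 Q (mem_insert_self Q Qs)
    set Meet := {P ∈ Ps | ¬Disjoint P Q}
    set Rest := {P ∈ Ps | Disjoint P Q}
    have hmeet := hf.add_sum_add_le hfbar (hQB.trans hB) hY (hYB.mono_right hQB) (Fs := Meet)
      (fun P hP => ⟨(hPs.subset_of_mem (mem_filter.1 hP).1).trans hA, (mem_filter.1 hP).2⟩)
      (fun P hP P' hP' => hPs.2.1 P (mem_filter.1 hP).1 P' (mem_filter.1 hP').1)
    have hnew : Q ∪ Meet.biUnion id ∉ Rest := fun h =>
      hQne.ne_empty (disjoint_self.1 ((mem_filter.1 h).2.mono_left subset_union_left))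
    have hrest := ih (Y := Y ∪ Q ∩ A) (hPs.merge hQne) (hQs.of_insert hQ)
      (union_subset (hQB.trans hB) hA) (sdiff_subset.trans hB)
      (union_subset hY (inter_subset_left.trans (hQB.trans hB)))
      (disjoint_union_left.2
        ⟨hYB.mono_right sdiff_subset, disjoint_sdiff.mono_left inter_subset_left⟩)
    have e₁ : Q ∪ A ∪ B \ Q = A ∪ B := by
      ext x
      simp only [mem_union, mem_sdiff]
      have := @hQB x
      tauto
    have e₂ : Y ∪ Q ∩ A ∪ (Q ∪ A) ∩ (B \ Q) = Y ∪ A ∩ B := by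
      ext x
      simp only [mem_union, mem_inter, mem_sdiff]
      have := @hQB x
      tauto
    rw [sum_insert hnew, e₁, e₂] at hrest
    rw [hPs.inter_biUnion_filter_not_disjoint] at hmeet
    rw [sum_insert hQ, ← sum_filter_add_sum_filter_not Ps (Disjoint · Q)]
    linarith

theorem supermodularOn_cover (hf : IntersectingSupermodularOn f D)
    (hfbar : IsSupaddCoverOn f fbar D) : SupermodularOn fbar D := by
  intro A B hA hB
  obtain ⟨Ps, hPs, hA'⟩ := hfbar.exists_partition hA
  obtain ⟨Qs, hQs, hB'⟩ := hfbar.exists_partition hB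
  have := hf.sum_add_sum_add_le hfbar hPs hQs hA hB (empty_subset D) (disjoint_empty_left B)
  rw [hfbar.1, empty_union] at this
  linarith

end IntersectingSupermodularOn

namespace SupermodularOn

variable {α : Type*} [DecidableEq α] {p q : Finset α → ℝ}

lemma max_insert_sub {v : α} {V : Finset α} (hp : SupermodularOn p (insert v V)) (hv : v ∉ V)
    (a : ℝ) : SupermodularOn (fun S => max (p S) (p (insert v S) - a)) V := by
  intro S T hS hT
  have hS' := hS.trans (subset_insert v V)
  have hT' := hT.trans (subset_insert v V)
  have h₁ := hp hS' hT'
  have h₂ := hp (insert_subset_insert v hS) hT'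
  rw [insert_inter_of_notMem fun h => hv (hT h), insert_union] at h₂
  have h₃ := hp hS' (insert_subset_insert v hT)
  rw [inter_insert_of_notMem fun h => hv (hS h), union_insert] at h₃
  have h₄ := hp (insert_subset_insert v hS) (insert_subset_insert v hT)
  rw [← insert_inter_distrib, ← insert_union_distrib] at h₄
  have := le_max_left (p (S ∩ T)) (p (insert v (S ∩ T)) - a)
  have := le_max_right (p (S ∩ T)) (p (insert v (S ∩ T)) - a)
  have := le_max_left (p (S ∪ T)) (p (insert v (S ∪ T)) - a)
  have := le_max_right (p (S ∪ T)) (p (insert v (S ∪ T)) - a)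
  dsimp only
  rcases max_choice (p S) (p (insert v S) - a) with hS | hS <;>
    rcases max_choice (p T) (p (insert v T) - a) with hT | hT <;>
    · rw [hS, hT]
      linarith

/-- Frank's discrete sandwich theorem. -/
theorem exists_modular_between {V : Finset α} (hp : SupermodularOn p V)
    (hq : SupermodularOn q V) (hp0 : p ∅ = 0) (hq0 : q ∅ = 0) (hpq : ∀ S ⊆ V, p S + q S ≤ 0) :
    ∃ x : α → ℝ, ∀ S ⊆ V, p S ≤ ∑ i ∈ S, x i ∧ q S ≤ -∑ i ∈ S, x i := by
  induction V using Finset.induction_on generalizing p q with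
  | empty =>
    exact ⟨0, fun S hS => by simp [subset_empty.1 hS, hp0, hq0]⟩
  | insert v V hv ih =>
    have hpair : ∀ S ⊆ V, ∀ T ⊆ V, p (insert v S) + q S + (p T + q (insert v T)) ≤ 0 := by
      intro S hS T hT
      have h₁ := hp (insert_subset_insert v hS) (hT.trans (subset_insert v V))
      rw [insert_inter_of_notMem fun h => hv (hT h), insert_union] at h₁
      have h₂ := hq (hS.trans (subset_insert v V)) (insert_subset_insert v hT)
      rw [inter_insert_of_notMem fun h => hv (hS h), union_insert] at h₂
      have h₃ := hpq (S ∩ T) ((inter_subset_left.trans hS).trans (subset_insert v V))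
      have h₄ := hpq (insert v (S ∪ T)) (insert_subset_insert v (union_subset hS hT))
      linarith
    -- `x v` must lie between every `p (insert v S) + q S` and every `-(p T + q (insert v T))`;
    -- by `hpair` the largest lower bound does.
    obtain ⟨S₀, hS₀, hmax⟩ := V.powerset.exists_max_image (fun S => p (insert v S) + q S)
      ⟨∅, empty_mem_powerset V⟩
    set a := p (insert v S₀) + q S₀
    have hle : ∀ S ⊆ V, p (insert v S) + q S ≤ a := fun S hS => hmax S (mem_powerset.2 hS)
    have hge : ∀ T ⊆ V, a + (p T + q (insert v T)) ≤ 0 := hpair S₀ (mem_powerset.1 hS₀)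
    obtain ⟨y, hy⟩ := ih (hp.max_insert_sub hv a) (hq.max_insert_sub hv (-a))
      (max_eq_left (by linarith [hle ∅ (empty_subset V)]) |>.trans hp0)
      (max_eq_left (by linarith [hge ∅ (empty_subset V)]) |>.trans hq0)
      (fun S hS => by
        have := hpq S (hS.trans (subset_insert v V))
        have := hpq (insert v S) (insert_subset_insert v hS)
        have := hle S hS
        have := hge S hS
        simp only [max_add, add_max, max_le_iff]
        refine ⟨⟨?_, ?_⟩, ?_, ?_⟩ <;> linarith)
    refine ⟨Function.update y v a, fun S hS => ?_⟩
    by_cases hvS : v ∈ S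
    · rw [sum_update_of_mem hvS, sdiff_singleton_eq_erase]
      obtain ⟨hpy, hqy⟩ := hy (S.erase v) (subset_insert_iff.1 hS)
      rw [insert_erase hvS] at hpy hqy
      constructor <;> linarith [le_max_right (p (S.erase v)) (p S - a),
        le_max_right (q (S.erase v)) (q S - -a)]
    · rw [sum_update_of_notMem hvS]
      obtain ⟨hpy, hqy⟩ := hy S ((subset_insert_iff_of_notMem hvS).1 hS)
      exact ⟨(le_max_left _ _).trans hpy, (le_max_left _ _).trans hqy⟩

end SupermodularOn

section Game

variable {α : Type*} [Fintype α] [DecidableEq α] {w u : Finset α → ℝ} {s : α}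

def CrossingSupermodular (w : Finset α → ℝ) : Prop :=
  ∀ S T : Finset α, (S ∩ T).Nonempty → S ∪ T ≠ univ → w S + w T ≤ w (S ∩ T) + w (S ∪ T)

namespace CrossingSupermodular

lemma intersectingSupermodularOn (hw : CrossingSupermodular w) (s : α) :
    IntersectingSupermodularOn w {s}ᶜ := fun S T hS hT hST =>
  hw S T hST fun h => (mem_union.1 (h ▸ mem_univ s)).elim
    (subset_compl_singleton.1 hS) (subset_compl_singleton.1 hT)

lemma intersectingSupermodularOn_of_eq_compl (hw : CrossingSupermodular w)
    (hu : ∀ S ⊆ {s}ᶜ, u S = w (univ \ S) - w univ) : IntersectingSupermodularOn u {s}ᶜ := by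
  intro S T hS hT hST
  have h := hw Sᶜ Tᶜ ⟨s, by simp [subset_compl_singleton.1 hS, subset_compl_singleton.1 hT]⟩
    (by rw [← compl_inter]; exact fun h => hST.ne_empty (compl_eq_univ_iff _ |>.1 h))
  rw [← compl_union, ← compl_inter] at h
  rw [hu S hS, hu T hT, hu _ (inter_subset_left.trans hS), hu _ (union_subset hS hT)]
  simp only [← compl_eq_univ_sdiff]
  linarith

end CrossingSupermodular

lemma exists_core_of_le_sum (hu : ∀ S ⊆ {s}ᶜ, u S = w (univ \ S) - w univ) {y : α → ℝ}
    (hyw : ∀ S ⊆ {s}ᶜ, w S ≤ ∑ i ∈ S, y i) (hyu : ∀ S ⊆ {s}ᶜ, u S ≤ -∑ i ∈ S, y i) :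
    ∃ x : α → ℝ, (∀ S, w S ≤ ∑ i ∈ S, x i) ∧ ∑ i, x i = w univ := by
  let x := Function.update y s (w univ - ∑ i ∈ {s}ᶜ, y i)
  have hxy : ∀ S ⊆ {s}ᶜ, ∑ i ∈ S, x i = ∑ i ∈ S, y i := fun S hS =>
    sum_update_of_notMem (subset_compl_singleton.1 hS) _ _
  have hx : ∑ i, x i = w univ := by
    rw [← sum_add_sum_compl {s}, sum_singleton, hxy _ subset_rfl]
    simp [x]
  refine ⟨x, fun S => ?_, hx⟩
  by_cases hsS : s ∈ S
  · have hSc : Sᶜ ⊆ {s}ᶜ := compl_subset_compl.2 (singleton_subset_iff.2 hsS)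
    have := hyu Sᶜ hSc
    rw [hu _ hSc, ← compl_eq_univ_sdiff, compl_compl, ← hxy _ hSc] at this
    linarith [sum_add_sum_compl S x]
  · rw [hxy S (subset_compl_singleton.2 hsS)]
    exact hyw S (subset_compl_singleton.2 hsS)

end Game

theorem core_nonempty_iff_covers_nonpositive {α : Type*} [Fintype α] [DecidableEq α]
    (w u wbar ubar : Finset α → ℝ) (s : α) (h0 : w ∅ = 0)
    (hcross : ∀ S T : Finset α, (S ∩ T).Nonempty → S ∪ T ≠ Finset.univ →
      w S + w T ≤ w (S ∩ T) + w (S ∪ T))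
    (hu : ∀ S : Finset α, S ⊆ ({s} : Finset α)ᶜ → u S = w (Finset.univ \ S) - w Finset.univ)
    (hwbar : IsSupaddCoverOn w wbar ({s} : Finset α)ᶜ)
    (hubar : IsSupaddCoverOn u ubar ({s} : Finset α)ᶜ) :
    (∃ x : α → ℝ, (∀ S : Finset α, w S ≤ ∑ i ∈ S, x i) ∧ ∑ i, x i = w Finset.univ)
      ↔ (∀ S : Finset α, S ⊆ ({s} : Finset α)ᶜ → 0 ≤ -wbar S - ubar S) := by
  have hw : CrossingSupermodular w := hcross
  have hu0 : u ∅ = 0 := by simp [hu ∅ (empty_subset _)]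
  constructor
  · rintro ⟨x, hxw, hx⟩ S hS
    have hwS := hwbar.le_sum (fun P _ _ => hxw P) hS
    have huS := hubar.le_sum (x := fun i => -x i) (fun P hP _ => by
      rw [hu P hP, sum_neg_distrib, ← compl_eq_univ_sdiff, ← hx]
      linarith [hxw Pᶜ, sum_add_sum_compl P x]) hS
    rw [sum_neg_distrib] at huS
    linarith
  · intro h
    obtain ⟨y, hy⟩ := SupermodularOn.exists_modular_between
      ((hw.intersectingSupermodularOn s).supermodularOn_cover hwbar)
      ((hw.intersectingSupermodularOn_of_eq_compl hu).supermodularOn_cover hubar)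
      hwbar.1 hubar.1 fun S hS => by linarith [h S hS]
    exact exists_core_of_le_sum hu (fun S hS => (hwbar.self_le h0.le hS).trans (hy S hS).1)
      (fun S hS => (hubar.self_le hu0.le hS).trans (hy S hS).2)
end
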